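/- arXiv:math/0605701 — 5 statements merged into one kernel-verified Lean document; each statement's English description precedes it below -/
import Mathlib

section
/- Let L be the lattice Z^3 modulo Z(1,1,1) and L^∨ = {(x1,x2,x3) ∈ Z^3 : x1+x2+x3 = 0}. Let W be the symmetric group S_3 acting on L^∨ by permuting coordinates, let μ ∈ L^∨, and let α = (1,-1,0). Let p_α : R^3 → R^3 be the projection along α given by p_α(x1,x2,x3) = ((x1+x2)/2, (x1+x2)/2, x3). Then every point of p_α(L^∨) lying in p_α(Conv(Wμ)) is the image under p_α of a point of L^∨ ∩ Conv(Wμ), where Conv denotes convex hull in the hyperplane {x1+x2+x3=0} of R^3. -/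
/-!
For `m` sorted increasingly, the hexagon `Conv(S₃ • m)` is the set of `x` with `∑ x = ∑ m`
and `m 0 ≤ xᵢ ≤ m 2` for all `i`: a sorted point of this box is reached from `m` by two
transfers between a pair of coordinates, each staying on the segment between a point and its
transposition. The fibre of `p_α` over `p_α w` is the line `x₂ = w₂`, `x₀ + x₁ = w₀ + w₁`;
on it the box constraints have integer endpoints, so a nonempty fibre contains a lattice point.
-/

open Function

def permOrbit {ι : Type*} (m : ι → ℝ) : Set (ι → ℝ) :=
  Set.range fun σ : Equiv.Perm ι => m ∘ σ

section PermOrbit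

variable {ι : Type*}

lemma mem_permOrbit_self (m : ι → ℝ) : m ∈ permOrbit m :=
  ⟨1, rfl⟩

lemma permOrbit_comp_perm (m : ι → ℝ) (τ : Equiv.Perm ι) :
    permOrbit (m ∘ τ) = permOrbit m := by
  ext x
  constructor
  · rintro ⟨σ, rfl⟩
    exact ⟨τ * σ, rfl⟩
  · rintro ⟨σ, rfl⟩
    exact ⟨τ⁻¹ * σ, by ext i; simp⟩

lemma comp_perm_mem_convexHull_permOrbit {m x : ι → ℝ}
    (hx : x ∈ convexHull ℝ (permOrbit m)) (σ : Equiv.Perm ι) :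
    x ∘ σ ∈ convexHull ℝ (permOrbit m) := by
  have hT : LinearMap.funLeft ℝ ℝ σ '' permOrbit m ⊆ permOrbit m := by
    rintro _ ⟨_, ⟨τ, rfl⟩, rfl⟩
    exact ⟨τ * σ, rfl⟩
  have := Set.mem_image_of_mem (LinearMap.funLeft ℝ ℝ σ) hx
  rw [LinearMap.image_convexHull] at this
  exact convexHull_mono hT this

lemma mem_convexHull_permOrbit_of_comp_perm {m x : ι → ℝ} (σ : Equiv.Perm ι)
    (hx : x ∘ σ ∈ convexHull ℝ (permOrbit m)) : x ∈ convexHull ℝ (permOrbit m) := by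
  simpa [comp_def] using comp_perm_mem_convexHull_permOrbit hx σ⁻¹

lemma sum_eq_and_mem_Icc_of_mem_convexHull_permOrbit [Fintype ι] {m x : ι → ℝ} {a b : ℝ}
    (ha : ∀ i, a ≤ m i) (hb : ∀ i, m i ≤ b) (hx : x ∈ convexHull ℝ (permOrbit m)) :
    ∑ i, x i = ∑ i, m i ∧ ∀ i, x i ∈ Set.Icc a b := by
  have hsum : IsLinearMap ℝ fun x : ι → ℝ => ∑ i, x i :=
    ⟨fun _ _ => Finset.sum_add_distrib, fun _ _ => (Finset.mul_sum _ _ _).symm⟩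
  set S := {x : ι → ℝ | ∑ i, x i = ∑ i, m i} ∩ Set.univ.pi fun _ => Set.Icc a b
  have hconv : Convex ℝ S :=
    (convex_hyperplane hsum _).inter (convex_pi fun _ _ => convex_Icc a b)
  have hsub : x ∈ S := by
    refine convexHull_min ?_ hconv hx
    rintro _ ⟨σ, rfl⟩
    exact ⟨Equiv.sum_comp σ m, fun i _ => ⟨ha (σ i), hb (σ i)⟩⟩
  exact ⟨hsub.1, fun i => hsub.2 i (Set.mem_univ i)⟩

end PermOrbit

lemma mem_segment_comp_swap {ι : Type*} [DecidableEq ι] {v x : ι → ℝ} {i j : ι}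
    (hx : ∀ k, k ≠ i → k ≠ j → x k = v k) (hsum : x i + x j = v i + v j)
    (hxi : x i ∈ Set.uIcc (v i) (v j)) : x ∈ segment ℝ v (v ∘ Equiv.swap i j) := by
  rw [← segment_eq_uIcc] at hxi
  obtain ⟨a, b, ha, hb, hab, hxi⟩ := hxi
  refine ⟨a, b, ha, hb, hab, funext fun k => ?_⟩
  simp only [Pi.add_apply, Pi.smul_apply, comp_apply, smul_eq_mul] at hxi ⊢
  by_cases hki : k = i
  · subst hki
    simpa using hxi
  by_cases hkj : k = j
  · subst hkj
    rw [Equiv.swap_apply_right]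
    linear_combination (v i + v k) * hab - hxi - hsum
  · rw [Equiv.swap_apply_of_ne_of_ne hki hkj, hx k hki hkj, ← add_mul, hab, one_mul]

lemma mem_convexHull_permOrbit_of_monotone {m x : Fin 3 → ℝ} (hm : Monotone m)
    (hx : Monotone x) (hsum : ∑ i, x i = ∑ i, m i) (h0 : m 0 ≤ x 0) (h2 : x 2 ≤ m 2) :
    x ∈ convexHull ℝ (permOrbit m) := by
  have hm01 : m 0 ≤ m 1 := hm (by decide)
  have hm12 : m 1 ≤ m 2 := hm (by decide)
  have hx01 : x 0 ≤ x 1 := hx (by decide)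
  have hx12 : x 1 ≤ x 2 := hx (by decide)
  simp only [Fin.sum_univ_three] at hsum
  have hm_mem : m ∈ convexHull ℝ (permOrbit m) := subset_convexHull ℝ _ (mem_permOrbit_self m)
  have transfer {v y : Fin 3 → ℝ} {i j : Fin 3} (hv : v ∈ convexHull ℝ (permOrbit m))
      (hy : ∀ k, k ≠ i → k ≠ j → y k = v k) (hsum : y i + y j = v i + v j)
      (hyi : y i ∈ Set.Icc (v i) (v j)) : y ∈ convexHull ℝ (permOrbit m) :=
    (convex_convexHull ℝ _).segment_subset hv (comp_perm_mem_convexHull_permOrbit hv _)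
      (mem_segment_comp_swap hy hsum (Set.Icc_subset_uIcc hyi))
  rcases le_or_gt (m 1) (x 2) with hx2 | hx2
  · have hv : ![m 0, m 1 + m 2 - x 2, x 2] ∈ convexHull ℝ (permOrbit m) :=
      transfer (i := 1) (j := 2) hm_mem (fun k hk1 hk2 => by fin_cases k <;> simp_all)
        (show m 1 + m 2 - x 2 + x 2 = m 1 + m 2 by ring)
        ⟨show m 1 ≤ m 1 + m 2 - x 2 by linarith, show m 1 + m 2 - x 2 ≤ m 2 by linarith⟩
    exact transfer (i := 0) (j := 1) hv (fun k hk0 hk1 => by fin_cases k <;> simp_all)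
      (show x 0 + x 1 = m 0 + (m 1 + m 2 - x 2) by linarith)
      ⟨h0, show x 0 ≤ m 1 + m 2 - x 2 by linarith⟩
  · have hv : ![x 0, m 0 + m 1 - x 0, m 2] ∈ convexHull ℝ (permOrbit m) :=
      transfer (i := 0) (j := 1) hm_mem (fun k hk0 hk1 => by fin_cases k <;> simp_all)
        (show x 0 + (m 0 + m 1 - x 0) = m 0 + m 1 by ring)
        ⟨h0, show x 0 ≤ m 1 by linarith⟩
    exact transfer (i := 1) (j := 2) hv (fun k hk1 hk2 => by fin_cases k <;> simp_all)
      (show x 1 + x 2 = m 0 + m 1 - x 0 + m 2 by linarith)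
      ⟨show m 0 + m 1 - x 0 ≤ x 1 by linarith, show x 1 ≤ m 2 by linarith⟩

lemma mem_convexHull_permOrbit_iff {m : Fin 3 → ℝ} (hm : Monotone m) {x : Fin 3 → ℝ} :
    x ∈ convexHull ℝ (permOrbit m) ↔
      ∑ i, x i = ∑ i, m i ∧ ∀ i, x i ∈ Set.Icc (m 0) (m 2) := by
  refine ⟨sum_eq_and_mem_Icc_of_mem_convexHull_permOrbit (fun i => hm (Fin.zero_le i))
    (fun i => hm (Fin.le_last i)), fun ⟨hsum, hI⟩ => ?_⟩
  refine mem_convexHull_permOrbit_of_comp_perm (Tuple.sort x) <|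
    mem_convexHull_permOrbit_of_monotone hm (Tuple.monotone_sort x) ?_ (hI _).1 (hI _).2
  exact (Equiv.sum_comp (Tuple.sort x) x).trans hsum

lemma exists_mem_Icc_and_sub_mem_Icc {a b s : ℤ} (h₁ : 2 * a ≤ s) (h₂ : s ≤ 2 * b) :
    ∃ t ∈ Set.Icc a b, s - t ∈ Set.Icc a b :=
  ⟨max a (s - b), ⟨le_max_left _ _, max_le (by omega) (by omega)⟩, by omega, by omega⟩

lemma exists_int_mem_convexHull_permOrbit {ν : Fin 3 → ℤ} (hν : Monotone ν) {c : Fin 3 → ℝ}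
    (hc : c ∈ convexHull ℝ (permOrbit fun i => (ν i : ℝ))) {s k : ℤ} (hs : c 0 + c 1 = s)
    (hk : c 2 = k) :
    ∃ t : ℤ, (fun i => ((![t, s - t, k] i : ℤ) : ℝ)) ∈
      convexHull ℝ (permOrbit fun i => (ν i : ℝ)) := by
  have hνℝ : Monotone fun i => (ν i : ℝ) := fun _ _ h => Int.cast_le.2 (hν h)
  obtain ⟨hcsum, hcI⟩ := (mem_convexHull_permOrbit_iff hνℝ).1 hc
  have hlo : (2 * ν 0 : ℝ) ≤ s := by linarith [(hcI 0).1, (hcI 1).1]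
  have hhi : (s : ℝ) ≤ 2 * ν 2 := by linarith [(hcI 0).2, (hcI 1).2]
  obtain ⟨t, ht, hst⟩ := exists_mem_Icc_and_sub_mem_Icc (by exact_mod_cast hlo : 2 * ν 0 ≤ s)
    (by exact_mod_cast hhi)
  refine ⟨t, (mem_convexHull_permOrbit_iff hνℝ).2 ⟨?_, fun i => ?_⟩⟩
  · simp only [Fin.sum_univ_three, Matrix.cons_val_zero, Matrix.cons_val_one, Matrix.cons_val,
      Int.cast_sub] at hcsum ⊢
    linarith
  · fin_cases i
    · simpa using ht
    · exact ⟨by simpa using (Int.cast_le (R := ℝ)).2 hst.1,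
        by simpa using (Int.cast_le (R := ℝ)).2 hst.2⟩
    · simpa [← hk] using hcI 2

theorem stmt_0_general (μ : Fin 3 → ℤ)
    (pα : (Fin 3 → ℝ) → (Fin 3 → ℝ))
    (hpα : ∀ x, pα x = ![(x 0 + x 1) / 2, (x 0 + x 1) / 2, x 2])
    (C : Set (Fin 3 → ℝ))
    (hC : C = convexHull ℝ
      {x : Fin 3 → ℝ | ∃ σ : Equiv.Perm (Fin 3), ∀ i, x i = (μ (σ i) : ℝ)})
    (y : Fin 3 → ℝ)
    (hy1 : ∃ w : Fin 3 → ℤ, w 0 + w 1 + w 2 = 0 ∧ y = pα (fun i => (w i : ℝ)))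
    (hy2 : y ∈ pα '' C) :
    ∃ z : Fin 3 → ℤ, z 0 + z 1 + z 2 = 0 ∧
      (fun i => (z i : ℝ)) ∈ C ∧ pα (fun i => (z i : ℝ)) = y := by
  obtain ⟨w, hw, rfl⟩ := hy1
  obtain ⟨c, hc, hcw⟩ := hy2
  have horbit : {x : Fin 3 → ℝ | ∃ σ : Equiv.Perm (Fin 3), ∀ i, x i = (μ (σ i) : ℝ)} =
      permOrbit fun i => (μ i : ℝ) := by
    ext x
    simp [permOrbit, funext_iff, eq_comm]
  have hC' : C = convexHull ℝ (permOrbit fun i => (μ (Tuple.sort μ i) : ℝ)) := by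
    rw [hC, horbit, ← permOrbit_comp_perm _ (Tuple.sort μ)]
    rfl
  have hc01 : c 0 + c 1 = ((w 0 + w 1 : ℤ) : ℝ) := by simpa [hpα] using congrFun hcw 0
  have hc2 : c 2 = w 2 := by simpa [hpα] using congrFun hcw 2
  rw [hC'] at hc ⊢
  obtain ⟨t, ht⟩ := exists_int_mem_convexHull_permOrbit (Tuple.monotone_sort μ) hc hc01 hc2
  refine ⟨![t, w 0 + w 1 - t, w 2], by simpa using hw, ht, ?_⟩
  funext i
  fin_cases i <;> simp [hpα]

/-- projection along α = (1,-1,0) of the lattice points of the convex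
hull of an S₃-Weyl orbit of μ in the sum-zero lattice hits every point of
p_α(L^∨) ∩ p_α(Conv(Wμ)). -/
theorem stmt_0 (μ : Fin 3 → ℤ) (hμ : μ 0 + μ 1 + μ 2 = 0)
    (pα : (Fin 3 → ℝ) → (Fin 3 → ℝ))
    (hpα : ∀ x, pα x = ![(x 0 + x 1) / 2, (x 0 + x 1) / 2, x 2])
    (C : Set (Fin 3 → ℝ))
    (hC : C = convexHull ℝ
      {x : Fin 3 → ℝ | ∃ σ : Equiv.Perm (Fin 3), ∀ i, x i = (μ (σ i) : ℝ)})
    (y : Fin 3 → ℝ)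
    (hy1 : ∃ w : Fin 3 → ℤ, w 0 + w 1 + w 2 = 0 ∧ y = pα (fun i => (w i : ℝ)))
    (hy2 : y ∈ pα '' C) :
    ∃ z : Fin 3 → ℤ, z 0 + z 1 + z 2 = 0 ∧
      (fun i => (z i : ℝ)) ∈ C ∧ pα (fun i => (z i : ℝ)) = y :=
  stmt_0_general μ pα hpα C hC y hy1 hy2
end

section
/- Let ψ : R^m → R be continuous and convex, and let α : R^m → R be a nonzero linear functional. Let A = {v : ψ(v) < 0, α(v) ≤ 0}, B = {v : ψ(v) < 0, α(v) ≥ 0}, and U = {v : ψ(v) - max(α(v),0) < 0}. If A and B are both nonempty, then U is path-connected. -/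
/-- with ψ continuous convex, α a nonzero linear functional,
A = {ψ < 0, α ≤ 0} and B = {ψ < 0, α ≥ 0} nonempty, the set
U = {v : ψ(v) - max(α(v),0) < 0} is path-connected. -/
theorem stmt_3 (m : ℕ) (ψ : (Fin m → ℝ) → ℝ) (hcont : Continuous ψ)
    (hconv : ∀ v v' : Fin m → ℝ, ∀ p : ℝ, 0 ≤ p → p ≤ 1 →
      ψ (p • v + (1 - p) • v') ≤ p * ψ v + (1 - p) * ψ v')
    (α : (Fin m → ℝ) →ₗ[ℝ] ℝ) (hα : α ≠ 0)
    (hA : {v : Fin m → ℝ | ψ v < 0 ∧ α v ≤ 0}.Nonempty)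
    (hB : {v : Fin m → ℝ | ψ v < 0 ∧ 0 ≤ α v}.Nonempty) :
    IsPathConnected {v : Fin m → ℝ | ψ v - max (α v) 0 < 0} := by
  have combo : ∀ s t p : ℝ, s < 0 → t < 0 → 0 ≤ p → p ≤ 1 →
      p * s + (1 - p) * t < 0 := by
    intro s t p hs ht hp hp1
    rcases eq_or_lt_of_le hp with h | h
    · simp [← h]; linarith
    · nlinarith
  set U₁ : Set (Fin m → ℝ) := {v | ψ v < 0 ∧ α v ≤ 0} with hU₁
  set U₂ : Set (Fin m → ℝ) := {v | ψ v - α v < 0 ∧ 0 ≤ α v} with hU₂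
  have hUeq : {v : Fin m → ℝ | ψ v - max (α v) 0 < 0} = U₁ ∪ U₂ := by
    ext v
    simp only [Set.mem_setOf_eq, Set.mem_union, hU₁, hU₂]
    rcases le_total (α v) 0 with h | h
    · rw [max_eq_right h]
      constructor
      · intro hv; exact Or.inl ⟨by linarith, h⟩
      · rintro (⟨h1, _⟩ | ⟨h1, h2⟩) <;> linarith
    · rw [max_eq_left h]
      constructor
      · intro hv; exact Or.inr ⟨hv, h⟩
      · rintro (⟨h1, h2⟩ | ⟨h1, _⟩) <;> linarith
  have hc1 : Convex ℝ U₁ := by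
    intro x hx y hy p q hp hq hpq
    obtain ⟨hx1, hx2⟩ := hx
    obtain ⟨hy1, hy2⟩ := hy
    have hq' : q = 1 - p := by linarith
    subst hq'
    have h := hconv x y p hp (by linarith)
    have hk := combo (ψ x) (ψ y) p hx1 hy1 hp (by linarith)
    refine ⟨by show ψ (p • x + (1 - p) • y) < 0; linarith, ?_⟩
    have : α (p • x + (1 - p) • y) = p * α x + (1 - p) * α y := by
      simp [map_add, map_smul, smul_eq_mul]
    rw [this]
    nlinarith
  have hc2 : Convex ℝ U₂ := by
    intro x hx y hy p q hp hq hpq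
    obtain ⟨hx1, hx2⟩ := hx
    obtain ⟨hy1, hy2⟩ := hy
    have hq' : q = 1 - p := by linarith
    subst hq'
    have h := hconv x y p hp (by linarith)
    have hk := combo (ψ x - α x) (ψ y - α y) p hx1 hy1 hp (by linarith)
    have hα' : α (p • x + (1 - p) • y) = p * α x + (1 - p) * α y := by
      simp [map_add, map_smul, smul_eq_mul]
    constructor
    · show ψ (p • x + (1 - p) • y) - α (p • x + (1 - p) • y) < 0
      rw [hα']; nlinarith
    · show 0 ≤ α (p • x + (1 - p) • y)
      rw [hα']; nlinarith
  obtain ⟨a, ha1, ha2⟩ := hA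
  obtain ⟨b, hb1, hb2⟩ := hB
  have hinter : (U₁ ∩ U₂).Nonempty := by
    rcases eq_or_lt_of_le ha2 with h0 | h0
    · exact ⟨a, ⟨ha1, ha2⟩, ⟨by show ψ a - α a < 0; rw [h0]; linarith,
        le_of_eq h0.symm⟩⟩
    · set t : ℝ := α a / (α a - α b) with ht
      have hden : α a - α b < 0 := by linarith
      have hne : α a - α b ≠ 0 := ne_of_lt hden
      have ht0 : 0 ≤ t := by
        have := div_nonneg (neg_nonneg.2 h0.le) (neg_nonneg.2 hden.le)
        rwa [neg_div_neg_eq] at this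
      have ht1 : t ≤ 1 := by
        rw [ht, div_le_one_of_neg hden]; linarith
      set z := (1 - t) • a + t • b with hz
      have hαz : α z = 0 := by
        have h1 : α z = (1 - t) * α a + t * α b := by
          simp [hz, map_add, map_smul, smul_eq_mul]
        have h2 : t * (α a - α b) = α a := div_mul_cancel₀ _ hne
        rw [h1]; linear_combination -h2
      have hψz : ψ z < 0 := by
        have h := hconv a b (1 - t) (by linarith) (by linarith)
        have he : (1 : ℝ) - (1 - t) = t := by ring
        rw [he] at h
        have hk := combo (ψ a) (ψ b) (1 - t) ha1 hb1 (by linarith) (by linarith)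
        rw [hz]
        linarith
      exact ⟨z, ⟨hψz, le_of_eq hαz⟩, ⟨by show ψ z - α z < 0; rw [hαz]; linarith,
        le_of_eq hαz.symm⟩⟩
  rw [hUeq]
  have hpc1 : IsPathConnected U₁ := hc1.isPathConnected ⟨a, ha1, ha2⟩
  have hpc2 : IsPathConnected U₂ := hc2.isPathConnected ⟨b, ⟨by linarith, hb2⟩⟩
  exact hpc1.union hpc2 hinter
end

section
/- In R^3/R(1,1,1) with dual lattice L^∨ = {x ∈ Z^3 : Σxi = 0}, consider the complete fan for SL_3 whose maximal cones σ_1,...,σ_6 are generated (in cyclic order) by the classes of L_1, -L_3; -L_3, L_2; L_2, -L_1; -L_1, L_3; L_3, -L_2; -L_2, L_1, where L_i are standard basis vectors. Let (u(σ_i))_{i=1..6} be a positive (G,T)-orthogonal set (i.e., consecutive differences u(σ_i) - u(σ_{i+1}) are nonnegative integer multiples of appropriate co-roots), defining the convex piecewise linear function ψ(v) = ⟨u(σ_i), v⟩ for v ∈ σ_i. Let α = L_1 - L_2. If ψ ≥ 0 on the half-space {v : ⟨α, v⟩ ≥ 0} and ψ(L_1) - ⟨α, L_1⟩ < 0, then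 ψ ≥ 0 on the half-space {v : ⟨α, v⟩ ≤ 0}. -/
/-- SL₃ fan with maximal cones σᵢ spanned by consecutive pairs of
L₁, -L₃, L₂, -L₁, L₃, -L₂.  Given a positive orthogonal set (u i) (consecutive
differences are nonnegative multiples of the appropriate co-roots) defining the
convex piecewise linear function ψ, with α = L₁ - L₂: if ψ ≥ 0 on the half-space
⟨α,v⟩ ≥ 0 and ψ(L₁) - ⟨α,L₁⟩ < 0, then ψ ≥ 0 on the half-space ⟨α,v⟩ ≤ 0. -/
theorem stmt_5 (u : Fin 6 → Fin 3 → ℤ)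
    (hsum : ∀ i, u i 0 + u i 1 + u i 2 = 0)
    (a b c d e f : ℕ)
    (h1 : ∀ j, u 1 j - u 0 j = (a : ℤ) * ![(-1 : ℤ), 1, 0] j)
    (h2 : ∀ j, u 2 j - u 1 j = (b : ℤ) * ![(-1 : ℤ), 0, 1] j)
    (h3 : ∀ j, u 3 j - u 2 j = (c : ℤ) * ![(0 : ℤ), -1, 1] j)
    (h4 : ∀ j, u 4 j - u 3 j = (d : ℤ) * ![(1 : ℤ), -1, 0] j)
    (h5 : ∀ j, u 5 j - u 4 j = (e : ℤ) * ![(1 : ℤ), 0, -1] j)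
    (h6 : ∀ j, u 0 j - u 5 j = (f : ℤ) * ![(0 : ℤ), 1, -1] j)
    (g : Fin 6 → Fin 3 → ℝ)
    (hg : g = ![![1, 0, 0], ![0, 0, -1], ![0, 1, 0], ![-1, 0, 0], ![0, 0, 1], ![0, -1, 0]])
    (ψ : (Fin 3 → ℝ) → ℝ)
    (hψ : ∀ i : Fin 6, ∀ s t : ℝ, 0 ≤ s → 0 ≤ t →
      ψ (s • g i + t • g (i + 1)) = ∑ j, (u i j : ℝ) * (s • g i + t • g (i + 1)) j)
    (hpos : ∀ i : Fin 6, ∀ s t : ℝ, 0 ≤ s → 0 ≤ t →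
      0 ≤ (s • g i + t • g (i + 1)) 0 - (s • g i + t • g (i + 1)) 1 →
      0 ≤ ψ (s • g i + t • g (i + 1)))
    (hneg : ψ (g 0) - 1 < 0) :
    ∀ i : Fin 6, ∀ s t : ℝ, 0 ≤ s → 0 ≤ t →
      (s • g i + t • g (i + 1)) 0 - (s • g i + t • g (i + 1)) 1 ≤ 0 →
      0 ≤ ψ (s • g i + t • g (i + 1)) := by
  subst hg
  have e0 : ψ ![1, 0, 0] = (u 0 0 : ℝ) := by
    simpa [Fin.sum_univ_three] using hψ 0 1 0 zero_le_one le_rfl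
  simp only [Matrix.cons_val_zero] at hneg
  have hA : u 0 0 ≤ 0 := by
    have : (u 0 0 : ℝ) < 1 := by rw [← e0]; linarith
    exact_mod_cast Int.lt_add_one_iff.mp (by exact_mod_cast this)
  have m5 : (![![1, 0, 0], ![0, 0, -1], ![0, 1, 0], ![-1, 0, 0], ![0, 0, 1], ![0, -1, 0]] :
      Fin 6 → Fin 3 → ℝ) 5 = ![0, -1, 0] := rfl
  have hB : (u 0 2 : ℝ) ≤ 0 := by
    have h := hpos 0 0 1 le_rfl zero_le_one
    have e := hψ 0 0 1 le_rfl zero_le_one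
    simp [Fin.sum_univ_three, m5] at h e
    linarith
  have hC : (0 : ℝ) ≤ (u 3 2 : ℝ) := by
    have h := hpos 3 0 1 le_rfl zero_le_one (by simp [m5, Matrix.cons_val_succ])
    have e := hψ 3 0 1 le_rfl zero_le_one
    simp [Fin.sum_univ_three, m5] at h e
    linarith
  have hD : (u 4 1 : ℝ) ≤ 0 := by
    have h := hpos 4 0 1 le_rfl zero_le_one (by simp [m5, Matrix.cons_val_succ])
    have e := hψ 4 0 1 le_rfl zero_le_one
    simp [Fin.sum_univ_three, m5] at h e
    linarith
  have hE : (0 : ℝ) ≤ (u 4 2 : ℝ) := by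
    have h := hpos 4 1 0 zero_le_one le_rfl (by simp [m5, Matrix.cons_val_succ])
    have e := hψ 4 1 0 zero_le_one le_rfl
    simp [Fin.sum_univ_three, m5] at h e
    linarith
  have hF : (0 : ℝ) ≤ (u 5 0 : ℝ) := by
    have h := hpos 5 0 1 le_rfl zero_le_one (by simp [m5, Matrix.cons_val_succ])
    have e := hψ 5 0 1 le_rfl zero_le_one
    simp [Fin.sum_univ_three, m5] at h e
    linarith
  have hG : (u 5 1 : ℝ) ≤ 0 := by
    have h := hpos 5 1 0 zero_le_one le_rfl (by simp [m5, Matrix.cons_val_succ])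
    have e := hψ 5 1 0 zero_le_one le_rfl
    simp [Fin.sum_univ_three, m5] at h e
    linarith
  -- integer component relations
  have s0 := hsum 0
  have e10 := h1 0; have e11 := h1 1; have e12 := h1 2
  have e20 := h2 0; have e21 := h2 1; have e22 := h2 2
  have e30 := h3 0; have e31 := h3 1; have e32 := h3 2
  simp at e10 e11 e12 e20 e21 e22 e30 e31 e32
  -- derived sign facts (as integers, then cast)
  have hu11 : (0 : ℝ) ≤ (u 1 1 : ℝ) := by
    have hB' : u 0 2 ≤ 0 := by exact_mod_cast hB
    have : (0 : ℤ) ≤ u 1 1 := by omega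
    exact_mod_cast this
  have hu12 : (u 1 2 : ℝ) ≤ 0 := by
    have hB' : u 0 2 ≤ 0 := by exact_mod_cast hB
    have : u 1 2 ≤ 0 := by omega
    exact_mod_cast this
  have hu21 : (0 : ℝ) ≤ (u 2 1 : ℝ) := by
    have hB' : u 0 2 ≤ 0 := by exact_mod_cast hB
    have : (0 : ℤ) ≤ u 2 1 := by omega
    exact_mod_cast this
  have hu20 : (u 2 0 : ℝ) ≤ 0 := by
    have : u 2 0 ≤ 0 := by omega
    exact_mod_cast this
  have hu30 : (u 3 0 : ℝ) ≤ 0 := by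
    have : u 3 0 ≤ 0 := by omega
    exact_mod_cast this
  intro i s t hs ht hd
  fin_cases i
  · have key := hψ 0 s t hs ht
    simp [Fin.sum_univ_three, m5] at key hd ⊢
    have h0 : s = 0 := le_antisymm hd hs
    subst h0
    nlinarith [key, mul_nonneg ht (neg_nonneg.mpr hB)]
  · have key := hψ 1 s t hs ht
    simp [Fin.sum_univ_three, m5] at key ⊢
    nlinarith [key, mul_nonneg ht hu11, mul_nonneg hs (neg_nonneg.mpr hu12)]
  · have key := hψ 2 s t hs ht
    simp [Fin.sum_univ_three, m5] at key ⊢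
    nlinarith [key, mul_nonneg hs hu21, mul_nonneg ht (neg_nonneg.mpr hu20)]
  · have key := hψ 3 s t hs ht
    simp [Fin.sum_univ_three, m5] at key ⊢
    nlinarith [key, mul_nonneg hs (neg_nonneg.mpr hu30), mul_nonneg ht hC]
  · have key := hψ 4 s t hs ht
    simp [Fin.sum_univ_three, m5] at key ⊢
    nlinarith [key, mul_nonneg hs hE, mul_nonneg ht (neg_nonneg.mpr hD)]
  · have key := hψ 5 s t hs ht
    simp [show ((5 : Fin 6) + 1) = 0 from rfl, Fin.sum_univ_three, m5] at key ⊢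
    linarith [key, mul_nonneg hs (neg_nonneg.mpr hG), mul_nonneg ht hF]
end

section
/- Counterexample to the analogue of Theorem B for G_2: Let P = Conv{(1,0,-1), (0,-1,1)} ⊂ {x ∈ R^3 : Σxi = 0}, a segment. Then P ∩ Z^3 = {(1,0,-1),(0,-1,1)} has exactly 2 elements, while the set p_α(P) ∩ p_α({x ∈ Z^3 : Σxi = 0}), where p_α(a,b,c) = ((a+b)/2,(a+b)/2,c) for α = (1,-1,0), equals {(1/2,1/2,-1), (0,0,0), (-1/2,-1/2,1)} and has exactly 3 elements. In particular p_α(P ∩ Z^3) ⊊ p_α(P) ∩ p_α({x ∈ Z^3 : Σxi = 0}). -/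
/-!
Both the segment `P` and the lattice `L` lie in the hyperplane `Σ xᵢ = 0`, on which `p_α`
only remembers the last coordinate `s`: it sends `x` to `(-s/2, -s/2, s)`. So `p_α(P)` is the
parameter interval `[-1, 1]` and `p_α(L)` is `ℤ`, which meet in three points, whereas the
lattice points of `P` are only the endpoints `s = ±1`; the midpoint `s = 0` is missed.
-/

open Set

namespace G2Counterexample

noncomputable section

def projα (x : Fin 3 → ℝ) : Fin 3 → ℝ := ![(x 0 + x 1) / 2, (x 0 + x 1) / 2, x 2]

def lineα (s : ℝ) : Fin 3 → ℝ := ![-s / 2, -s / 2, s]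

/-- The point of the segment `Conv{(1,0,-1), (0,-1,1)}` with last coordinate `s`. -/
def segmentPoint (s : ℝ) : Fin 3 → ℝ := ![(1 - s) / 2, -(1 + s) / 2, s]

lemma lineα_injective : Function.Injective lineα := fun s t h => by
  simpa [lineα] using congrFun h 2

lemma projα_eq_lineα {x : Fin 3 → ℝ} (hx : x 0 + x 1 + x 2 = 0) : projα x = lineα (x 2) := by
  have : x 0 + x 1 = -x 2 := by linarith
  simp only [projα, lineα, this]

lemma projα_segmentPoint (s : ℝ) : projα (segmentPoint s) = lineα s :=
  projα_eq_lineα (by simp [segmentPoint]; ring)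

lemma segment_eq_image_segmentPoint :
    segment ℝ ![(1 : ℝ), 0, -1] ![(0 : ℝ), -1, 1] = segmentPoint '' Icc (-1) 1 := by
  have hpoint (t : ℝ) :
      (1 - t) • ![(1 : ℝ), 0, -1] + t • ![(0 : ℝ), -1, 1] = segmentPoint (2 * t - 1) := by
    ext i; fin_cases i <;> simp [segmentPoint] <;> ring
  rw [segment_eq_image]
  ext x
  constructor
  · rintro ⟨t, ⟨ht0, ht1⟩, rfl⟩
    exact ⟨2 * t - 1, ⟨by linarith, by linarith⟩, (hpoint t).symm⟩
  · rintro ⟨s, ⟨hs0, hs1⟩, rfl⟩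
    refine ⟨(s + 1) / 2, ⟨by linarith, by linarith⟩, ?_⟩
    dsimp only
    rw [hpoint]; congr 1; ring

lemma integral_segmentPoint_iff {s : ℝ} (hs : s ∈ Icc (-1) 1) :
    (∃ z : Fin 3 → ℤ, ∀ i, segmentPoint s i = z i) ↔ s = -1 ∨ s = 1 := by
  constructor
  · rintro ⟨z, hz⟩
    have h0 : (1 - s) / 2 = z 0 := by simpa [segmentPoint] using hz 0
    have hz0 : 0 ≤ z 0 ∧ z 0 ≤ 1 := by
      constructor
      · exact_mod_cast (by linarith [hs.2] : (0 : ℝ) ≤ z 0)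
      · exact_mod_cast (by linarith [hs.1] : (z 0 : ℝ) ≤ 1)
    rcases (by omega : z 0 = 0 ∨ z 0 = 1) with h | h <;> rw [h] at h0 <;> push_cast at h0
    · right; linarith
    · left; linarith
  · rintro (rfl | rfl)
    · exact ⟨![1, 0, -1], fun i => by fin_cases i <;> norm_num [segmentPoint]⟩
    · exact ⟨![0, -1, 1], fun i => by fin_cases i <;> norm_num [segmentPoint]⟩

lemma integral_points_image_segmentPoint :
    {x | x ∈ segmentPoint '' Icc (-1) 1 ∧ ∃ z : Fin 3 → ℤ, ∀ i, x i = (z i : ℝ)} =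
      segmentPoint '' {-1, 1} := by
  ext x
  constructor
  · rintro ⟨⟨s, hs, rfl⟩, hint⟩
    exact ⟨s, (integral_segmentPoint_iff hs).1 hint, rfl⟩
  · rintro ⟨s, hs, rfl⟩
    have hs' : s ∈ Icc (-1 : ℝ) 1 := by rcases hs with rfl | rfl <;> norm_num
    exact ⟨⟨s, hs', rfl⟩, (integral_segmentPoint_iff hs').2 hs⟩

lemma image_projα_sum_zero_lattice :
    projα '' {x | ∃ z : Fin 3 → ℤ, (∀ i, x i = (z i : ℝ)) ∧ z 0 + z 1 + z 2 = 0} =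
      lineα '' range Int.cast := by
  ext y
  constructor
  · rintro ⟨x, ⟨z, hz, hsum⟩, rfl⟩
    refine ⟨z 2, ⟨z 2, rfl⟩, ?_⟩
    rw [projα_eq_lineα (by simp only [hz]; exact_mod_cast hsum), hz]
  · rintro ⟨_, ⟨n, rfl⟩, rfl⟩
    refine ⟨![-n, 0, n], ⟨![-n, 0, n], fun i => by fin_cases i <;> simp, by simp⟩, ?_⟩
    rw [projα_eq_lineα (by simp)]
    simp

lemma Icc_inter_range_intCast : Icc (-1 : ℝ) 1 ∩ range Int.cast = {-1, 0, 1} := by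
  ext s
  constructor
  · rintro ⟨⟨h1, h2⟩, n, rfl⟩
    have : -1 ≤ n ∧ n ≤ 1 := ⟨by exact_mod_cast h1, by exact_mod_cast h2⟩
    rcases (by omega : n = -1 ∨ n = 0 ∨ n = 1) with rfl | rfl | rfl <;> simp
  · rintro (rfl | rfl | rfl)
    · exact ⟨by norm_num, -1, by simp⟩
    · exact ⟨by norm_num, 0, by simp⟩
    · exact ⟨by norm_num, 1, by simp⟩

end

end G2Counterexample

open G2Counterexample in
/-- counterexample to the analogue of Theorem B for G₂.  For the
segment P = Conv{(1,0,-1),(0,-1,1)}: its lattice points are exactly the two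
endpoints, while p_α(P) ∩ p_α(L^∨) consists of exactly three points, so
p_α(P ∩ ℤ³) is a strict subset of p_α(P) ∩ p_α(L^∨). -/
theorem stmt_10 (pα : (Fin 3 → ℝ) → (Fin 3 → ℝ))
    (hpα : ∀ x, pα x = ![(x 0 + x 1) / 2, (x 0 + x 1) / 2, x 2])
    (P : Set (Fin 3 → ℝ))
    (hP : P = segment ℝ ![(1 : ℝ), 0, -1] ![(0 : ℝ), -1, 1])
    (L : Set (Fin 3 → ℝ))
    (hL : L = {x | ∃ z : Fin 3 → ℤ, (∀ i, x i = (z i : ℝ)) ∧ z 0 + z 1 + z 2 = 0}) :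
    {x | x ∈ P ∧ ∃ z : Fin 3 → ℤ, ∀ i, x i = (z i : ℝ)} =
      ({![(1 : ℝ), 0, -1], ![(0 : ℝ), -1, 1]} : Set (Fin 3 → ℝ)) ∧
    pα '' P ∩ pα '' L =
      ({![(1 : ℝ) / 2, 1 / 2, -1], ![(0 : ℝ), 0, 0], ![-(1 : ℝ) / 2, -(1 / 2), 1]} :
        Set (Fin 3 → ℝ)) ∧
    pα '' {x | x ∈ P ∧ ∃ z : Fin 3 → ℤ, ∀ i, x i = (z i : ℝ)} ⊂
      pα '' P ∩ pα '' L := by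
  obtain rfl : pα = projα := funext hpα
  subst hP hL
  have hproj : projα ∘ segmentPoint = lineα := funext projα_segmentPoint
  have hinter : projα '' (segmentPoint '' Icc (-1) 1) ∩
      projα '' {x | ∃ z : Fin 3 → ℤ, (∀ i, x i = (z i : ℝ)) ∧ z 0 + z 1 + z 2 = 0} =
      lineα '' {-1, 0, 1} := by
    rw [image_projα_sum_zero_lattice, ← image_comp, hproj, ← image_inter lineα_injective,
      Icc_inter_range_intCast]
  rw [segment_eq_image_segmentPoint, integral_points_image_segmentPoint, hinter, ← image_comp, hproj]
  refine ⟨?_, ?_, lineα_injective.image_strictMono ?_⟩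
  · simp only [image_insert_eq, image_singleton, segmentPoint]
    norm_num
  · simp only [image_insert_eq, image_singleton, lineα]
    norm_num
  · exact ssubset_iff_of_subset (by intro s; simp; tauto) |>.2 ⟨0, by simp⟩
end

section
/- For the rank-2 root system with simple co-roots data of SL_3: if (u_1, ..., u_6) ∈ (Z^3)^6 is a sequence of vectors each with coordinate sum 0, such that consecutive differences satisfy u_2 - u_1 = a(L_2 - L_1), u_3 - u_2 = b(L_3 - L_1), u_4 - u_3 = c(L_3 - L_2), u_5 - u_4 = d(L_1 - L_2), u_6 - u_5 = e(L_1 - L_3), u_1 - u_6 = f(L_2 - L_3) with a,b,c,d,e,f nonnegative integers, then a + b = d + e, and the piecewise linear function on R^3/R(1,1,1) defined by ⟨u_i, ·⟩ on the i-th maximal Weyl cone is convex (lower convex). -/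
private lemma stmt16_lin_convex (c0 c1 c2 : ℝ) :
    ConvexOn ℝ Set.univ (fun v : Fin 3 → ℝ => c0 * v 0 + c1 * v 1 + c2 * v 2) := by
  refine ⟨convex_univ, fun p _ q _ α β hα hβ hαβ => le_of_eq ?_⟩
  simp only [Pi.add_apply, Pi.smul_apply, smul_eq_mul]
  ring

set_option maxHeartbeats 1000000 in
/-- for a positive orthogonal set (u₁,...,u₆) on the SL₃ Weyl fan
(consecutive differences are nonnegative multiples of the co-roots in cyclic
order), we have a + b = d + e, and the piecewise linear function ψ defined by
⟨uᵢ,·⟩ on the i-th maximal Weyl cone (and invariant along (1,1,1)) is convex. -/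
theorem stmt_16 (u : Fin 6 → Fin 3 → ℤ)
    (hsum : ∀ i, u i 0 + u i 1 + u i 2 = 0)
    (a b c d e f : ℕ)
    (h1 : ∀ j, u 1 j - u 0 j = (a : ℤ) * ![(-1 : ℤ), 1, 0] j)
    (h2 : ∀ j, u 2 j - u 1 j = (b : ℤ) * ![(-1 : ℤ), 0, 1] j)
    (h3 : ∀ j, u 3 j - u 2 j = (c : ℤ) * ![(0 : ℤ), -1, 1] j)
    (h4 : ∀ j, u 4 j - u 3 j = (d : ℤ) * ![(1 : ℤ), -1, 0] j)
    (h5 : ∀ j, u 5 j - u 4 j = (e : ℤ) * ![(1 : ℤ), 0, -1] j)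
    (h6 : ∀ j, u 0 j - u 5 j = (f : ℤ) * ![(0 : ℤ), 1, -1] j)
    (g : Fin 6 → Fin 3 → ℝ)
    (hg : g = ![![1, 0, 0], ![0, 0, -1], ![0, 1, 0], ![-1, 0, 0], ![0, 0, 1], ![0, -1, 0]])
    (ψ : (Fin 3 → ℝ) → ℝ)
    (hinv : ∀ (v : Fin 3 → ℝ) (t : ℝ), ψ (v + fun _ => t) = ψ v)
    (hψ : ∀ i : Fin 6, ∀ s t : ℝ, 0 ≤ s → 0 ≤ t →
      ψ (s • g i + t • g (i + 1)) = ∑ j, (u i j : ℝ) * (s • g i + t • g (i + 1)) j) :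
    a + b = d + e ∧ ConvexOn ℝ Set.univ ψ := by
  have E10 : (u 1 0 : ℝ) = (u 0 0 : ℝ) - (a : ℝ) := by
    have h := h1 0; simp at h
    exact_mod_cast (show u 1 0 = u 0 0 - (a : ℤ) by linarith)
  have E11 : (u 1 1 : ℝ) = (u 0 1 : ℝ) + (a : ℝ) := by
    have h := h1 1; simp at h
    exact_mod_cast (show u 1 1 = u 0 1 + (a : ℤ) by linarith)
  have E12 : (u 1 2 : ℝ) = (u 0 2 : ℝ) := by
    have h := h1 2; simp at h
    exact_mod_cast (show u 1 2 = u 0 2 by linarith)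
  have E20 : (u 2 0 : ℝ) = (u 1 0 : ℝ) - (b : ℝ) := by
    have h := h2 0; simp at h
    exact_mod_cast (show u 2 0 = u 1 0 - (b : ℤ) by linarith)
  have E21 : (u 2 1 : ℝ) = (u 1 1 : ℝ) := by
    have h := h2 1; simp at h
    exact_mod_cast (show u 2 1 = u 1 1 by linarith)
  have E22 : (u 2 2 : ℝ) = (u 1 2 : ℝ) + (b : ℝ) := by
    have h := h2 2; simp at h
    exact_mod_cast (show u 2 2 = u 1 2 + (b : ℤ) by linarith)
  have E30 : (u 3 0 : ℝ) = (u 2 0 : ℝ) := by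
    have h := h3 0; simp at h
    exact_mod_cast (show u 3 0 = u 2 0 by linarith)
  have E31 : (u 3 1 : ℝ) = (u 2 1 : ℝ) - (c : ℝ) := by
    have h := h3 1; simp at h
    exact_mod_cast (show u 3 1 = u 2 1 - (c : ℤ) by linarith)
  have E32 : (u 3 2 : ℝ) = (u 2 2 : ℝ) + (c : ℝ) := by
    have h := h3 2; simp at h
    exact_mod_cast (show u 3 2 = u 2 2 + (c : ℤ) by linarith)
  have E40 : (u 4 0 : ℝ) = (u 3 0 : ℝ) + (d : ℝ) := by
    have h := h4 0; simp at h
    exact_mod_cast (show u 4 0 = u 3 0 + (d : ℤ) by linarith)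
  have E41 : (u 4 1 : ℝ) = (u 3 1 : ℝ) - (d : ℝ) := by
    have h := h4 1; simp at h
    exact_mod_cast (show u 4 1 = u 3 1 - (d : ℤ) by linarith)
  have E42 : (u 4 2 : ℝ) = (u 3 2 : ℝ) := by
    have h := h4 2; simp at h
    exact_mod_cast (show u 4 2 = u 3 2 by linarith)
  have E50 : (u 5 0 : ℝ) = (u 4 0 : ℝ) + (e : ℝ) := by
    have h := h5 0; simp at h
    exact_mod_cast (show u 5 0 = u 4 0 + (e : ℤ) by linarith)
  have E51 : (u 5 1 : ℝ) = (u 4 1 : ℝ) := by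
    have h := h5 1; simp at h
    exact_mod_cast (show u 5 1 = u 4 1 by linarith)
  have E52 : (u 5 2 : ℝ) = (u 4 2 : ℝ) - (e : ℝ) := by
    have h := h5 2; simp at h
    exact_mod_cast (show u 5 2 = u 4 2 - (e : ℤ) by linarith)
  have E60 : (u 0 0 : ℝ) = (u 5 0 : ℝ) := by
    have h := h6 0; simp at h
    exact_mod_cast (show u 0 0 = u 5 0 by linarith)
  have E61 : (u 0 1 : ℝ) = (u 5 1 : ℝ) + (f : ℝ) := by
    have h := h6 1; simp at h
    exact_mod_cast (show u 0 1 = u 5 1 + (f : ℤ) by linarith)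
  have E62 : (u 0 2 : ℝ) = (u 5 2 : ℝ) - (f : ℝ) := by
    have h := h6 2; simp at h
    exact_mod_cast (show u 0 2 = u 5 2 - (f : ℤ) by linarith)
  have hab : a + b = d + e := by
    have p1 := h1 0; have p2 := h2 0; have p3 := h3 0; have p4 := h4 0
    have p5 := h5 0; have p6 := h6 0
    simp at p1 p2 p3 p4 p5 p6
    have hz : (a : ℤ) + b = d + e := by linarith
    exact_mod_cast hz
  refine ⟨hab, ?_⟩
  have ha0 : (0:ℝ) ≤ (a : ℝ) := Nat.cast_nonneg a
  have hb0 : (0:ℝ) ≤ (b : ℝ) := Nat.cast_nonneg b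
  have hc0 : (0:ℝ) ≤ (c : ℝ) := Nat.cast_nonneg c
  have hd0 : (0:ℝ) ≤ (d : ℝ) := Nat.cast_nonneg d
  have he0 : (0:ℝ) ≤ (e : ℝ) := Nat.cast_nonneg e
  have hf0 : (0:ℝ) ≤ (f : ℝ) := Nat.cast_nonneg f
  have hsR0 : (u 0 0 : ℝ) + (u 0 1 : ℝ) + (u 0 2 : ℝ) = 0 := by exact_mod_cast hsum 0
  have hsR1 : (u 1 0 : ℝ) + (u 1 1 : ℝ) + (u 1 2 : ℝ) = 0 := by exact_mod_cast hsum 1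
  have hsR2 : (u 2 0 : ℝ) + (u 2 1 : ℝ) + (u 2 2 : ℝ) = 0 := by exact_mod_cast hsum 2
  have hsR3 : (u 3 0 : ℝ) + (u 3 1 : ℝ) + (u 3 2 : ℝ) = 0 := by exact_mod_cast hsum 3
  have hsR4 : (u 4 0 : ℝ) + (u 4 1 : ℝ) + (u 4 2 : ℝ) = 0 := by exact_mod_cast hsum 4
  have hsR5 : (u 5 0 : ℝ) + (u 5 1 : ℝ) + (u 5 2 : ℝ) = 0 := by exact_mod_cast hsum 5
  have G0 : g 0 = ![(1:ℝ), 0, 0] := by rw [hg]; rfl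
  have G0s : g (0 + 1) = ![(0:ℝ), 0, -1] := by rw [hg]; rfl
  have G1 : g 1 = ![(0:ℝ), 0, -1] := by rw [hg]; rfl
  have G1s : g (1 + 1) = ![(0:ℝ), 1, 0] := by rw [hg]; rfl
  have G2 : g 2 = ![(0:ℝ), 1, 0] := by rw [hg]; rfl
  have G2s : g (2 + 1) = ![(-1:ℝ), 0, 0] := by rw [hg]; rfl
  have G3 : g 3 = ![(-1:ℝ), 0, 0] := by rw [hg]; rfl
  have G3s : g (3 + 1) = ![(0:ℝ), 0, 1] := by rw [hg]; rfl
  have G4 : g 4 = ![(0:ℝ), 0, 1] := by rw [hg]; rfl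
  have G4s : g (4 + 1) = ![(0:ℝ), -1, 0] := by rw [hg]; rfl
  have G5 : g 5 = ![(0:ℝ), -1, 0] := by rw [hg]; rfl
  have G5s : g (5 + 1) = ![(1:ℝ), 0, 0] := by rw [hg]; rfl
  have hψeq : ψ = fun v : Fin 3 → ℝ => ((((u 0 0 : ℝ) * v 0 + (u 0 1 : ℝ) * v 1 + (u 0 2 : ℝ) * v 2) ⊔ ((u 1 0 : ℝ) * v 0 + (u 1 1 : ℝ) * v 1 + (u 1 2 : ℝ) * v 2)) ⊔ (((u 2 0 : ℝ) * v 0 + (u 2 1 : ℝ) * v 1 + (u 2 2 : ℝ) * v 2) ⊔ ((u 3 0 : ℝ) * v 0 + (u 3 1 : ℝ) * v 1 + (u 3 2 : ℝ) * v 2))) ⊔ (((u 4 0 : ℝ) * v 0 + (u 4 1 : ℝ) * v 1 + (u 4 2 : ℝ) * v 2) ⊔ ((u 5 0 : ℝ) * v 0 + (u 5 1 : ℝ) * v 1 + (u 5 2 : ℝ) * v 2)) := by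
    funext v
    show ψ v = ((((u 0 0 : ℝ) * v 0 + (u 0 1 : ℝ) * v 1 + (u 0 2 : ℝ) * v 2) ⊔ ((u 1 0 : ℝ) * v 0 + (u 1 1 : ℝ) * v 1 + (u 1 2 : ℝ) * v 2)) ⊔ (((u 2 0 : ℝ) * v 0 + (u 2 1 : ℝ) * v 1 + (u 2 2 : ℝ) * v 2) ⊔ ((u 3 0 : ℝ) * v 0 + (u 3 1 : ℝ) * v 1 + (u 3 2 : ℝ) * v 2))) ⊔ (((u 4 0 : ℝ) * v 0 + (u 4 1 : ℝ) * v 1 + (u 4 2 : ℝ) * v 2) ⊔ ((u 5 0 : ℝ) * v 0 + (u 5 1 : ℝ) * v 1 + (u 5 2 : ℝ) * v 2))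
    rcases le_total (v 0) (v 1) with hxy | hxy
    · rcases le_total (v 1) (v 2) with hyz | hyz
      · -- region 3
        have hS : (0:ℝ) ≤ (v 1 - v 0) := by linarith
        have hT : (0:ℝ) ≤ (v 2 - v 1) := by linarith
        have key := hψ 3 (v 1 - v 0) (v 2 - v 1) hS hT
        rw [G3, G3s] at key
        have hv : v = ((v 1 - v 0) • ![(-1:ℝ), 0, 0] + (v 2 - v 1) • ![(0:ℝ), 0, 1]) + (fun _ => v 1) := by
          funext j; fin_cases j <;> simp <;> ring
        have hval : ψ v = (u 3 0 : ℝ) * v 0 + (u 3 1 : ℝ) * v 1 + (u 3 2 : ℝ) * v 2 := by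
          calc ψ v = ψ (((v 1 - v 0) • ![(-1:ℝ), 0, 0] + (v 2 - v 1) • ![(0:ℝ), 0, 1]) + (fun _ => v 1)) := congrArg ψ hv
          _ = ψ ((v 1 - v 0) • ![(-1:ℝ), 0, 0] + (v 2 - v 1) • ![(0:ℝ), 0, 1]) := hinv _ _
          _ = ∑ j, (u 3 j : ℝ) * ((v 1 - v 0) • ![(-1:ℝ), 0, 0] + (v 2 - v 1) • ![(0:ℝ), 0, 1]) j := key
          _ = (u 3 0 : ℝ) * v 0 + (u 3 1 : ℝ) * v 1 + (u 3 2 : ℝ) * v 2 := by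
              simp [Fin.sum_univ_three]
              linear_combination (-(v 1)) * hsR3
        have D0 : ((u 3 0 : ℝ) * v 0 + (u 3 1 : ℝ) * v 1 + (u 3 2 : ℝ) * v 2) - ((u 0 0 : ℝ) * v 0 + (u 0 1 : ℝ) * v 1 + (u 0 2 : ℝ) * v 2) = (d : ℝ) * (v 1 - v 0) + (e : ℝ) * (v 1 - v 0) + (e : ℝ) * (v 2 - v 1) + (f : ℝ) * (v 2 - v 1) := by
          linear_combination (-(v 0)) * E40 + (-(v 1)) * E41 + (-(v 2)) * E42 + (-(v 0)) * E50 + (-(v 1)) * E51 + (-(v 2)) * E52 + (-(v 0)) * E60 + (-(v 1)) * E61 + (-(v 2)) * E62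
        have D1 : ((u 3 0 : ℝ) * v 0 + (u 3 1 : ℝ) * v 1 + (u 3 2 : ℝ) * v 2) - ((u 1 0 : ℝ) * v 0 + (u 1 1 : ℝ) * v 1 + (u 1 2 : ℝ) * v 2) = (b : ℝ) * (v 1 - v 0) + (b : ℝ) * (v 2 - v 1) + (c : ℝ) * (v 2 - v 1) := by
          linear_combination ((v 0)) * E20 + ((v 1)) * E21 + ((v 2)) * E22 + ((v 0)) * E30 + ((v 1)) * E31 + ((v 2)) * E32
        have D2 : ((u 3 0 : ℝ) * v 0 + (u 3 1 : ℝ) * v 1 + (u 3 2 : ℝ) * v 2) - ((u 2 0 : ℝ) * v 0 + (u 2 1 : ℝ) * v 1 + (u 2 2 : ℝ) * v 2) = (c : ℝ) * (v 2 - v 1) := by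
          linear_combination ((v 0)) * E30 + ((v 1)) * E31 + ((v 2)) * E32
        have D4 : ((u 3 0 : ℝ) * v 0 + (u 3 1 : ℝ) * v 1 + (u 3 2 : ℝ) * v 2) - ((u 4 0 : ℝ) * v 0 + (u 4 1 : ℝ) * v 1 + (u 4 2 : ℝ) * v 2) = (d : ℝ) * (v 1 - v 0) := by
          linear_combination (-(v 0)) * E40 + (-(v 1)) * E41 + (-(v 2)) * E42
        have D5 : ((u 3 0 : ℝ) * v 0 + (u 3 1 : ℝ) * v 1 + (u 3 2 : ℝ) * v 2) - ((u 5 0 : ℝ) * v 0 + (u 5 1 : ℝ) * v 1 + (u 5 2 : ℝ) * v 2) = (d : ℝ) * (v 1 - v 0) + (e : ℝ) * (v 1 - v 0) + (e : ℝ) * (v 2 - v 1) := by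
          linear_combination (-(v 0)) * E40 + (-(v 1)) * E41 + (-(v 2)) * E42 + (-(v 0)) * E50 + (-(v 1)) * E51 + (-(v 2)) * E52
        rw [hval]
        apply le_antisymm
        · exact le_sup_of_le_left (le_sup_of_le_right le_sup_right)
        · simp only [sup_le_iff]
          refine ⟨⟨⟨?_, ?_⟩, ⟨?_, ?_⟩⟩, ⟨?_, ?_⟩⟩
          · linarith [D0, mul_nonneg hd0 hS, mul_nonneg he0 hS, mul_nonneg he0 hT, mul_nonneg hf0 hT]
          · linarith [D1, mul_nonneg hb0 hS, mul_nonneg hb0 hT, mul_nonneg hc0 hT]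
          · linarith [D2, mul_nonneg hc0 hT]
          · exact le_refl _
          · linarith [D4, mul_nonneg hd0 hS]
          · linarith [D5, mul_nonneg hd0 hS, mul_nonneg he0 hS, mul_nonneg he0 hT]
      · rcases le_total (v 0) (v 2) with hxz | hxz
        · -- region 2
          have hS : (0:ℝ) ≤ (v 1 - v 2) := by linarith
          have hT : (0:ℝ) ≤ (v 2 - v 0) := by linarith
          have key := hψ 2 (v 1 - v 2) (v 2 - v 0) hS hT
          rw [G2, G2s] at key
          have hv : v = ((v 1 - v 2) • ![(0:ℝ), 1, 0] + (v 2 - v 0) • ![(-1:ℝ), 0, 0]) + (fun _ => v 2) := by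
            funext j; fin_cases j <;> simp <;> ring
          have hval : ψ v = (u 2 0 : ℝ) * v 0 + (u 2 1 : ℝ) * v 1 + (u 2 2 : ℝ) * v 2 := by
            calc ψ v = ψ (((v 1 - v 2) • ![(0:ℝ), 1, 0] + (v 2 - v 0) • ![(-1:ℝ), 0, 0]) + (fun _ => v 2)) := congrArg ψ hv
            _ = ψ ((v 1 - v 2) • ![(0:ℝ), 1, 0] + (v 2 - v 0) • ![(-1:ℝ), 0, 0]) := hinv _ _
            _ = ∑ j, (u 2 j : ℝ) * ((v 1 - v 2) • ![(0:ℝ), 1, 0] + (v 2 - v 0) • ![(-1:ℝ), 0, 0]) j := key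
            _ = (u 2 0 : ℝ) * v 0 + (u 2 1 : ℝ) * v 1 + (u 2 2 : ℝ) * v 2 := by
                simp [Fin.sum_univ_three]
                linear_combination (-(v 2)) * hsR2
          have D0 : ((u 2 0 : ℝ) * v 0 + (u 2 1 : ℝ) * v 1 + (u 2 2 : ℝ) * v 2) - ((u 0 0 : ℝ) * v 0 + (u 0 1 : ℝ) * v 1 + (u 0 2 : ℝ) * v 2) = (a : ℝ) * (v 1 - v 2) + (a : ℝ) * (v 2 - v 0) + (b : ℝ) * (v 2 - v 0) := by
            linear_combination ((v 0)) * E10 + ((v 1)) * E11 + ((v 2)) * E12 + ((v 0)) * E20 + ((v 1)) * E21 + ((v 2)) * E22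
          have D1 : ((u 2 0 : ℝ) * v 0 + (u 2 1 : ℝ) * v 1 + (u 2 2 : ℝ) * v 2) - ((u 1 0 : ℝ) * v 0 + (u 1 1 : ℝ) * v 1 + (u 1 2 : ℝ) * v 2) = (b : ℝ) * (v 2 - v 0) := by
            linear_combination ((v 0)) * E20 + ((v 1)) * E21 + ((v 2)) * E22
          have D3 : ((u 2 0 : ℝ) * v 0 + (u 2 1 : ℝ) * v 1 + (u 2 2 : ℝ) * v 2) - ((u 3 0 : ℝ) * v 0 + (u 3 1 : ℝ) * v 1 + (u 3 2 : ℝ) * v 2) = (c : ℝ) * (v 1 - v 2) := by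
            linear_combination (-(v 0)) * E30 + (-(v 1)) * E31 + (-(v 2)) * E32
          have D4 : ((u 2 0 : ℝ) * v 0 + (u 2 1 : ℝ) * v 1 + (u 2 2 : ℝ) * v 2) - ((u 4 0 : ℝ) * v 0 + (u 4 1 : ℝ) * v 1 + (u 4 2 : ℝ) * v 2) = (c : ℝ) * (v 1 - v 2) + (d : ℝ) * (v 1 - v 2) + (d : ℝ) * (v 2 - v 0) := by
            linear_combination (-(v 0)) * E30 + (-(v 1)) * E31 + (-(v 2)) * E32 + (-(v 0)) * E40 + (-(v 1)) * E41 + (-(v 2)) * E42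
          have D5 : ((u 2 0 : ℝ) * v 0 + (u 2 1 : ℝ) * v 1 + (u 2 2 : ℝ) * v 2) - ((u 5 0 : ℝ) * v 0 + (u 5 1 : ℝ) * v 1 + (u 5 2 : ℝ) * v 2) = (c : ℝ) * (v 1 - v 2) + (d : ℝ) * (v 1 - v 2) + (d : ℝ) * (v 2 - v 0) + (e : ℝ) * (v 2 - v 0) := by
            linear_combination (-(v 0)) * E30 + (-(v 1)) * E31 + (-(v 2)) * E32 + (-(v 0)) * E40 + (-(v 1)) * E41 + (-(v 2)) * E42 + (-(v 0)) * E50 + (-(v 1)) * E51 + (-(v 2)) * E52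
          rw [hval]
          apply le_antisymm
          · exact le_sup_of_le_left (le_sup_of_le_right le_sup_left)
          · simp only [sup_le_iff]
            refine ⟨⟨⟨?_, ?_⟩, ⟨?_, ?_⟩⟩, ⟨?_, ?_⟩⟩
            · linarith [D0, mul_nonneg ha0 hS, mul_nonneg ha0 hT, mul_nonneg hb0 hT]
            · linarith [D1, mul_nonneg hb0 hT]
            · exact le_refl _
            · linarith [D3, mul_nonneg hc0 hS]
            · linarith [D4, mul_nonneg hc0 hS, mul_nonneg hd0 hS, mul_nonneg hd0 hT]
            · linarith [D5, mul_nonneg hc0 hS, mul_nonneg hd0 hS, mul_nonneg hd0 hT, mul_nonneg he0 hT]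
        · -- region 1
          have hS : (0:ℝ) ≤ (v 0 - v 2) := by linarith
          have hT : (0:ℝ) ≤ (v 1 - v 0) := by linarith
          have key := hψ 1 (v 0 - v 2) (v 1 - v 0) hS hT
          rw [G1, G1s] at key
          have hv : v = ((v 0 - v 2) • ![(0:ℝ), 0, -1] + (v 1 - v 0) • ![(0:ℝ), 1, 0]) + (fun _ => v 0) := by
            funext j; fin_cases j <;> simp <;> ring
          have hval : ψ v = (u 1 0 : ℝ) * v 0 + (u 1 1 : ℝ) * v 1 + (u 1 2 : ℝ) * v 2 := by
            calc ψ v = ψ (((v 0 - v 2) • ![(0:ℝ), 0, -1] + (v 1 - v 0) • ![(0:ℝ), 1, 0]) + (fun _ => v 0)) := congrArg ψ hv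
            _ = ψ ((v 0 - v 2) • ![(0:ℝ), 0, -1] + (v 1 - v 0) • ![(0:ℝ), 1, 0]) := hinv _ _
            _ = ∑ j, (u 1 j : ℝ) * ((v 0 - v 2) • ![(0:ℝ), 0, -1] + (v 1 - v 0) • ![(0:ℝ), 1, 0]) j := key
            _ = (u 1 0 : ℝ) * v 0 + (u 1 1 : ℝ) * v 1 + (u 1 2 : ℝ) * v 2 := by
                simp [Fin.sum_univ_three]
                linear_combination (-(v 0)) * hsR1
          have D0 : ((u 1 0 : ℝ) * v 0 + (u 1 1 : ℝ) * v 1 + (u 1 2 : ℝ) * v 2) - ((u 0 0 : ℝ) * v 0 + (u 0 1 : ℝ) * v 1 + (u 0 2 : ℝ) * v 2) = (a : ℝ) * (v 1 - v 0) := by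
            linear_combination ((v 0)) * E10 + ((v 1)) * E11 + ((v 2)) * E12
          have D2 : ((u 1 0 : ℝ) * v 0 + (u 1 1 : ℝ) * v 1 + (u 1 2 : ℝ) * v 2) - ((u 2 0 : ℝ) * v 0 + (u 2 1 : ℝ) * v 1 + (u 2 2 : ℝ) * v 2) = (b : ℝ) * (v 0 - v 2) := by
            linear_combination (-(v 0)) * E20 + (-(v 1)) * E21 + (-(v 2)) * E22
          have D3 : ((u 1 0 : ℝ) * v 0 + (u 1 1 : ℝ) * v 1 + (u 1 2 : ℝ) * v 2) - ((u 3 0 : ℝ) * v 0 + (u 3 1 : ℝ) * v 1 + (u 3 2 : ℝ) * v 2) = (b : ℝ) * (v 0 - v 2) + (c : ℝ) * (v 0 - v 2) + (c : ℝ) * (v 1 - v 0) := by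
            linear_combination (-(v 0)) * E20 + (-(v 1)) * E21 + (-(v 2)) * E22 + (-(v 0)) * E30 + (-(v 1)) * E31 + (-(v 2)) * E32
          have D4 : ((u 1 0 : ℝ) * v 0 + (u 1 1 : ℝ) * v 1 + (u 1 2 : ℝ) * v 2) - ((u 4 0 : ℝ) * v 0 + (u 4 1 : ℝ) * v 1 + (u 4 2 : ℝ) * v 2) = (b : ℝ) * (v 0 - v 2) + (c : ℝ) * (v 0 - v 2) + (c : ℝ) * (v 1 - v 0) + (d : ℝ) * (v 1 - v 0) := by
            linear_combination (-(v 0)) * E20 + (-(v 1)) * E21 + (-(v 2)) * E22 + (-(v 0)) * E30 + (-(v 1)) * E31 + (-(v 2)) * E32 + (-(v 0)) * E40 + (-(v 1)) * E41 + (-(v 2)) * E42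
          have D5 : ((u 1 0 : ℝ) * v 0 + (u 1 1 : ℝ) * v 1 + (u 1 2 : ℝ) * v 2) - ((u 5 0 : ℝ) * v 0 + (u 5 1 : ℝ) * v 1 + (u 5 2 : ℝ) * v 2) = (f : ℝ) * (v 0 - v 2) + (a : ℝ) * (v 1 - v 0) + (f : ℝ) * (v 1 - v 0) := by
            linear_combination ((v 0)) * E60 + ((v 1)) * E61 + ((v 2)) * E62 + ((v 0)) * E10 + ((v 1)) * E11 + ((v 2)) * E12
          rw [hval]
          apply le_antisymm
          · exact le_sup_of_le_left (le_sup_of_le_left le_sup_right)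
          · simp only [sup_le_iff]
            refine ⟨⟨⟨?_, ?_⟩, ⟨?_, ?_⟩⟩, ⟨?_, ?_⟩⟩
            · linarith [D0, mul_nonneg ha0 hT]
            · exact le_refl _
            · linarith [D2, mul_nonneg hb0 hS]
            · linarith [D3, mul_nonneg hb0 hS, mul_nonneg hc0 hS, mul_nonneg hc0 hT]
            · linarith [D4, mul_nonneg hb0 hS, mul_nonneg hc0 hS, mul_nonneg hc0 hT, mul_nonneg hd0 hT]
            · linarith [D5, mul_nonneg hf0 hS, mul_nonneg ha0 hT, mul_nonneg hf0 hT]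
    · rcases le_total (v 1) (v 2) with hyz | hyz
      · rcases le_total (v 0) (v 2) with hxz | hxz
        · -- region 4
          have hS : (0:ℝ) ≤ (v 2 - v 0) := by linarith
          have hT : (0:ℝ) ≤ (v 0 - v 1) := by linarith
          have key := hψ 4 (v 2 - v 0) (v 0 - v 1) hS hT
          rw [G4, G4s] at key
          have hv : v = ((v 2 - v 0) • ![(0:ℝ), 0, 1] + (v 0 - v 1) • ![(0:ℝ), -1, 0]) + (fun _ => v 0) := by
            funext j; fin_cases j <;> simp <;> ring
          have hval : ψ v = (u 4 0 : ℝ) * v 0 + (u 4 1 : ℝ) * v 1 + (u 4 2 : ℝ) * v 2 := by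
            calc ψ v = ψ (((v 2 - v 0) • ![(0:ℝ), 0, 1] + (v 0 - v 1) • ![(0:ℝ), -1, 0]) + (fun _ => v 0)) := congrArg ψ hv
            _ = ψ ((v 2 - v 0) • ![(0:ℝ), 0, 1] + (v 0 - v 1) • ![(0:ℝ), -1, 0]) := hinv _ _
            _ = ∑ j, (u 4 j : ℝ) * ((v 2 - v 0) • ![(0:ℝ), 0, 1] + (v 0 - v 1) • ![(0:ℝ), -1, 0]) j := key
            _ = (u 4 0 : ℝ) * v 0 + (u 4 1 : ℝ) * v 1 + (u 4 2 : ℝ) * v 2 := by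
                simp [Fin.sum_univ_three]
                linear_combination (-(v 0)) * hsR4
          have D0 : ((u 4 0 : ℝ) * v 0 + (u 4 1 : ℝ) * v 1 + (u 4 2 : ℝ) * v 2) - ((u 0 0 : ℝ) * v 0 + (u 0 1 : ℝ) * v 1 + (u 0 2 : ℝ) * v 2) = (e : ℝ) * (v 2 - v 0) + (f : ℝ) * (v 2 - v 0) + (f : ℝ) * (v 0 - v 1) := by
            linear_combination (-(v 0)) * E50 + (-(v 1)) * E51 + (-(v 2)) * E52 + (-(v 0)) * E60 + (-(v 1)) * E61 + (-(v 2)) * E62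
          have D1 : ((u 4 0 : ℝ) * v 0 + (u 4 1 : ℝ) * v 1 + (u 4 2 : ℝ) * v 2) - ((u 1 0 : ℝ) * v 0 + (u 1 1 : ℝ) * v 1 + (u 1 2 : ℝ) * v 2) = (e : ℝ) * (v 2 - v 0) + (f : ℝ) * (v 2 - v 0) + (a : ℝ) * (v 0 - v 1) + (f : ℝ) * (v 0 - v 1) := by
            linear_combination (-(v 0)) * E50 + (-(v 1)) * E51 + (-(v 2)) * E52 + (-(v 0)) * E60 + (-(v 1)) * E61 + (-(v 2)) * E62 + (-(v 0)) * E10 + (-(v 1)) * E11 + (-(v 2)) * E12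
          have D2 : ((u 4 0 : ℝ) * v 0 + (u 4 1 : ℝ) * v 1 + (u 4 2 : ℝ) * v 2) - ((u 2 0 : ℝ) * v 0 + (u 2 1 : ℝ) * v 1 + (u 2 2 : ℝ) * v 2) = (c : ℝ) * (v 2 - v 0) + (c : ℝ) * (v 0 - v 1) + (d : ℝ) * (v 0 - v 1) := by
            linear_combination ((v 0)) * E30 + ((v 1)) * E31 + ((v 2)) * E32 + ((v 0)) * E40 + ((v 1)) * E41 + ((v 2)) * E42
          have D3 : ((u 4 0 : ℝ) * v 0 + (u 4 1 : ℝ) * v 1 + (u 4 2 : ℝ) * v 2) - ((u 3 0 : ℝ) * v 0 + (u 3 1 : ℝ) * v 1 + (u 3 2 : ℝ) * v 2) = (d : ℝ) * (v 0 - v 1) := by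
            linear_combination ((v 0)) * E40 + ((v 1)) * E41 + ((v 2)) * E42
          have D5 : ((u 4 0 : ℝ) * v 0 + (u 4 1 : ℝ) * v 1 + (u 4 2 : ℝ) * v 2) - ((u 5 0 : ℝ) * v 0 + (u 5 1 : ℝ) * v 1 + (u 5 2 : ℝ) * v 2) = (e : ℝ) * (v 2 - v 0) := by
            linear_combination (-(v 0)) * E50 + (-(v 1)) * E51 + (-(v 2)) * E52
          rw [hval]
          apply le_antisymm
          · exact le_sup_of_le_right le_sup_left
          · simp only [sup_le_iff]
            refine ⟨⟨⟨?_, ?_⟩, ⟨?_, ?_⟩⟩, ⟨?_, ?_⟩⟩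
            · linarith [D0, mul_nonneg he0 hS, mul_nonneg hf0 hS, mul_nonneg hf0 hT]
            · linarith [D1, mul_nonneg he0 hS, mul_nonneg hf0 hS, mul_nonneg ha0 hT, mul_nonneg hf0 hT]
            · linarith [D2, mul_nonneg hc0 hS, mul_nonneg hc0 hT, mul_nonneg hd0 hT]
            · linarith [D3, mul_nonneg hd0 hT]
            · exact le_refl _
            · linarith [D5, mul_nonneg he0 hS]
        · -- region 5
          have hS : (0:ℝ) ≤ (v 2 - v 1) := by linarith
          have hT : (0:ℝ) ≤ (v 0 - v 2) := by linarith
          have key := hψ 5 (v 2 - v 1) (v 0 - v 2) hS hT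
          rw [G5, G5s] at key
          have hv : v = ((v 2 - v 1) • ![(0:ℝ), -1, 0] + (v 0 - v 2) • ![(1:ℝ), 0, 0]) + (fun _ => v 2) := by
            funext j; fin_cases j <;> simp <;> ring
          have hval : ψ v = (u 5 0 : ℝ) * v 0 + (u 5 1 : ℝ) * v 1 + (u 5 2 : ℝ) * v 2 := by
            calc ψ v = ψ (((v 2 - v 1) • ![(0:ℝ), -1, 0] + (v 0 - v 2) • ![(1:ℝ), 0, 0]) + (fun _ => v 2)) := congrArg ψ hv
            _ = ψ ((v 2 - v 1) • ![(0:ℝ), -1, 0] + (v 0 - v 2) • ![(1:ℝ), 0, 0]) := hinv _ _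
            _ = ∑ j, (u 5 j : ℝ) * ((v 2 - v 1) • ![(0:ℝ), -1, 0] + (v 0 - v 2) • ![(1:ℝ), 0, 0]) j := key
            _ = (u 5 0 : ℝ) * v 0 + (u 5 1 : ℝ) * v 1 + (u 5 2 : ℝ) * v 2 := by
                simp [Fin.sum_univ_three]
                linear_combination (-(v 2)) * hsR5
          have D0 : ((u 5 0 : ℝ) * v 0 + (u 5 1 : ℝ) * v 1 + (u 5 2 : ℝ) * v 2) - ((u 0 0 : ℝ) * v 0 + (u 0 1 : ℝ) * v 1 + (u 0 2 : ℝ) * v 2) = (f : ℝ) * (v 2 - v 1) := by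
            linear_combination (-(v 0)) * E60 + (-(v 1)) * E61 + (-(v 2)) * E62
          have D1 : ((u 5 0 : ℝ) * v 0 + (u 5 1 : ℝ) * v 1 + (u 5 2 : ℝ) * v 2) - ((u 1 0 : ℝ) * v 0 + (u 1 1 : ℝ) * v 1 + (u 1 2 : ℝ) * v 2) = (a : ℝ) * (v 2 - v 1) + (f : ℝ) * (v 2 - v 1) + (a : ℝ) * (v 0 - v 2) := by
            linear_combination (-(v 0)) * E60 + (-(v 1)) * E61 + (-(v 2)) * E62 + (-(v 0)) * E10 + (-(v 1)) * E11 + (-(v 2)) * E12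
          have D2 : ((u 5 0 : ℝ) * v 0 + (u 5 1 : ℝ) * v 1 + (u 5 2 : ℝ) * v 2) - ((u 2 0 : ℝ) * v 0 + (u 2 1 : ℝ) * v 1 + (u 2 2 : ℝ) * v 2) = (a : ℝ) * (v 2 - v 1) + (f : ℝ) * (v 2 - v 1) + (a : ℝ) * (v 0 - v 2) + (b : ℝ) * (v 0 - v 2) := by
            linear_combination (-(v 0)) * E60 + (-(v 1)) * E61 + (-(v 2)) * E62 + (-(v 0)) * E10 + (-(v 1)) * E11 + (-(v 2)) * E12 + (-(v 0)) * E20 + (-(v 1)) * E21 + (-(v 2)) * E22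
          have D3 : ((u 5 0 : ℝ) * v 0 + (u 5 1 : ℝ) * v 1 + (u 5 2 : ℝ) * v 2) - ((u 3 0 : ℝ) * v 0 + (u 3 1 : ℝ) * v 1 + (u 3 2 : ℝ) * v 2) = (d : ℝ) * (v 2 - v 1) + (d : ℝ) * (v 0 - v 2) + (e : ℝ) * (v 0 - v 2) := by
            linear_combination ((v 0)) * E40 + ((v 1)) * E41 + ((v 2)) * E42 + ((v 0)) * E50 + ((v 1)) * E51 + ((v 2)) * E52
          have D4 : ((u 5 0 : ℝ) * v 0 + (u 5 1 : ℝ) * v 1 + (u 5 2 : ℝ) * v 2) - ((u 4 0 : ℝ) * v 0 + (u 4 1 : ℝ) * v 1 + (u 4 2 : ℝ) * v 2) = (e : ℝ) * (v 0 - v 2) := by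
            linear_combination ((v 0)) * E50 + ((v 1)) * E51 + ((v 2)) * E52
          rw [hval]
          apply le_antisymm
          · exact le_sup_of_le_right le_sup_right
          · simp only [sup_le_iff]
            refine ⟨⟨⟨?_, ?_⟩, ⟨?_, ?_⟩⟩, ⟨?_, ?_⟩⟩
            · linarith [D0, mul_nonneg hf0 hS]
            · linarith [D1, mul_nonneg ha0 hS, mul_nonneg hf0 hS, mul_nonneg ha0 hT]
            · linarith [D2, mul_nonneg ha0 hS, mul_nonneg hf0 hS, mul_nonneg ha0 hT, mul_nonneg hb0 hT]
            · linarith [D3, mul_nonneg hd0 hS, mul_nonneg hd0 hT, mul_nonneg he0 hT]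
            · linarith [D4, mul_nonneg he0 hT]
            · exact le_refl _
      · -- region 0
        have hS : (0:ℝ) ≤ (v 0 - v 1) := by linarith
        have hT : (0:ℝ) ≤ (v 1 - v 2) := by linarith
        have key := hψ 0 (v 0 - v 1) (v 1 - v 2) hS hT
        rw [G0, G0s] at key
        have hv : v = ((v 0 - v 1) • ![(1:ℝ), 0, 0] + (v 1 - v 2) • ![(0:ℝ), 0, -1]) + (fun _ => v 1) := by
          funext j; fin_cases j <;> simp <;> ring
        have hval : ψ v = (u 0 0 : ℝ) * v 0 + (u 0 1 : ℝ) * v 1 + (u 0 2 : ℝ) * v 2 := by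
          calc ψ v = ψ (((v 0 - v 1) • ![(1:ℝ), 0, 0] + (v 1 - v 2) • ![(0:ℝ), 0, -1]) + (fun _ => v 1)) := congrArg ψ hv
          _ = ψ ((v 0 - v 1) • ![(1:ℝ), 0, 0] + (v 1 - v 2) • ![(0:ℝ), 0, -1]) := hinv _ _
          _ = ∑ j, (u 0 j : ℝ) * ((v 0 - v 1) • ![(1:ℝ), 0, 0] + (v 1 - v 2) • ![(0:ℝ), 0, -1]) j := key
          _ = (u 0 0 : ℝ) * v 0 + (u 0 1 : ℝ) * v 1 + (u 0 2 : ℝ) * v 2 := by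
              simp [Fin.sum_univ_three]
              linear_combination (-(v 1)) * hsR0
        have D1 : ((u 0 0 : ℝ) * v 0 + (u 0 1 : ℝ) * v 1 + (u 0 2 : ℝ) * v 2) - ((u 1 0 : ℝ) * v 0 + (u 1 1 : ℝ) * v 1 + (u 1 2 : ℝ) * v 2) = (a : ℝ) * (v 0 - v 1) := by
          linear_combination (-(v 0)) * E10 + (-(v 1)) * E11 + (-(v 2)) * E12
        have D2 : ((u 0 0 : ℝ) * v 0 + (u 0 1 : ℝ) * v 1 + (u 0 2 : ℝ) * v 2) - ((u 2 0 : ℝ) * v 0 + (u 2 1 : ℝ) * v 1 + (u 2 2 : ℝ) * v 2) = (a : ℝ) * (v 0 - v 1) + (b : ℝ) * (v 0 - v 1) + (b : ℝ) * (v 1 - v 2) := by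
          linear_combination (-(v 0)) * E10 + (-(v 1)) * E11 + (-(v 2)) * E12 + (-(v 0)) * E20 + (-(v 1)) * E21 + (-(v 2)) * E22
        have D3 : ((u 0 0 : ℝ) * v 0 + (u 0 1 : ℝ) * v 1 + (u 0 2 : ℝ) * v 2) - ((u 3 0 : ℝ) * v 0 + (u 3 1 : ℝ) * v 1 + (u 3 2 : ℝ) * v 2) = (a : ℝ) * (v 0 - v 1) + (b : ℝ) * (v 0 - v 1) + (b : ℝ) * (v 1 - v 2) + (c : ℝ) * (v 1 - v 2) := by
          linear_combination (-(v 0)) * E10 + (-(v 1)) * E11 + (-(v 2)) * E12 + (-(v 0)) * E20 + (-(v 1)) * E21 + (-(v 2)) * E22 + (-(v 0)) * E30 + (-(v 1)) * E31 + (-(v 2)) * E32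
        have D4 : ((u 0 0 : ℝ) * v 0 + (u 0 1 : ℝ) * v 1 + (u 0 2 : ℝ) * v 2) - ((u 4 0 : ℝ) * v 0 + (u 4 1 : ℝ) * v 1 + (u 4 2 : ℝ) * v 2) = (e : ℝ) * (v 0 - v 1) + (e : ℝ) * (v 1 - v 2) + (f : ℝ) * (v 1 - v 2) := by
          linear_combination ((v 0)) * E50 + ((v 1)) * E51 + ((v 2)) * E52 + ((v 0)) * E60 + ((v 1)) * E61 + ((v 2)) * E62
        have D5 : ((u 0 0 : ℝ) * v 0 + (u 0 1 : ℝ) * v 1 + (u 0 2 : ℝ) * v 2) - ((u 5 0 : ℝ) * v 0 + (u 5 1 : ℝ) * v 1 + (u 5 2 : ℝ) * v 2) = (f : ℝ) * (v 1 - v 2) := by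
          linear_combination ((v 0)) * E60 + ((v 1)) * E61 + ((v 2)) * E62
        rw [hval]
        apply le_antisymm
        · exact le_sup_of_le_left (le_sup_of_le_left le_sup_left)
        · simp only [sup_le_iff]
          refine ⟨⟨⟨?_, ?_⟩, ⟨?_, ?_⟩⟩, ⟨?_, ?_⟩⟩
          · exact le_refl _
          · linarith [D1, mul_nonneg ha0 hS]
          · linarith [D2, mul_nonneg ha0 hS, mul_nonneg hb0 hS, mul_nonneg hb0 hT]
          · linarith [D3, mul_nonneg ha0 hS, mul_nonneg hb0 hS, mul_nonneg hb0 hT, mul_nonneg hc0 hT]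
          · linarith [D4, mul_nonneg he0 hS, mul_nonneg he0 hT, mul_nonneg hf0 hT]
          · linarith [D5, mul_nonneg hf0 hT]
  rw [hψeq]
  exact (((stmt16_lin_convex _ _ _).sup (stmt16_lin_convex _ _ _)).sup ((stmt16_lin_convex _ _ _).sup (stmt16_lin_convex _ _ _))).sup ((stmt16_lin_convex _ _ _).sup (stmt16_lin_convex _ _ _))
end
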